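/- Let 0 → U⊗V →i Π →j K → 0 be a short exact sequence of finite-dimensional real vector spaces with U ≠ 0. Then the U-valued pairing ⟨ε,σ⟩_U = ε(σ) between Π*_U and Π is nondegenerate: if ε(σ) = 0 for all σ ∈ Π then ε = 0, and if ε(σ) = 0 for all ε ∈ Π*_U then σ = 0. -/
import Mathlib


open Function Module

/-- The contraction `id_U ⊗ v* : U ⊗ V → U`, `u ⊗ v ↦ v*(v) • u`. -/
noncomputable def contractR (U V : Type*) [AddCommGroup U] [Module ℝ U]
    [AddCommGroup V] [Module ℝ V] (f : V →ₗ[ℝ] ℝ) :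
    TensorProduct ℝ U V →ₗ[ℝ] U :=
  (TensorProduct.rid ℝ U).toLinearMap ∘ₗ LinearMap.lTensor U f

lemma contractR_tmul (U V : Type*) [AddCommGroup U] [Module ℝ U]
    [AddCommGroup V] [Module ℝ V] (f : V →ₗ[ℝ] ℝ) (u : U) (v : V) :
    contractR U V f (u ⊗ₜ v) = f v • u := by
  simp [contractR, TensorProduct.smul_tmul']

lemma contractR_eq_zero (U V : Type*) [AddCommGroup U] [Module ℝ U]
    [FiniteDimensional ℝ U]
    [AddCommGroup V] [Module ℝ V] [FiniteDimensional ℝ V]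
    (θ : TensorProduct ℝ U V)
    (h : ∀ vs : V →ₗ[ℝ] ℝ, contractR U V vs θ = 0) : θ = 0 := by
  set bU := Module.finBasis ℝ U
  set bV := Module.finBasis ℝ V
  set B := bU.tensorProduct bV
  have hrepr : ∀ p : Fin (finrank ℝ U) × Fin (finrank ℝ V), B.repr θ p = 0 := by
    rintro ⟨i0, k0⟩
    have h2 : (bU.coord i0 ∘ₗ contractR U V (bV.coord k0)) θ = B.repr θ (i0, k0) := by
      conv_lhs => rw [← B.sum_repr θ]
      rw [map_sum]
      have hterm : ∀ p : Fin (finrank ℝ U) × Fin (finrank ℝ V),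
          (bU.coord i0 ∘ₗ contractR U V (bV.coord k0)) (B.repr θ p • B p)
          = if p = (i0, k0) then B.repr θ p else 0 := by
        rintro ⟨i1, k1⟩
        simp only [map_smul, LinearMap.comp_apply, B, Basis.tensorProduct_apply,
          contractR_tmul, map_smul, Basis.coord_apply, Basis.repr_self, smul_eq_mul,
          Finsupp.single_apply, Prod.mk.injEq]
        by_cases ha : i1 = i0 <;> by_cases hb : k1 = k0 <;> simp [ha, hb]
      simp_rw [hterm]
      simp
    rw [← h2]
    simp [h]
  have : B.repr θ = 0 := Finsupp.ext hrepr
  simpa using congrArg B.repr.symm this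

theorem stmt12 (U V K W : Type*)
    [AddCommGroup U] [Module ℝ U] [FiniteDimensional ℝ U] [Nontrivial U]
    [AddCommGroup V] [Module ℝ V] [FiniteDimensional ℝ V]
    [AddCommGroup K] [Module ℝ K] [FiniteDimensional ℝ K]
    [AddCommGroup W] [Module ℝ W] [FiniteDimensional ℝ W]
    (i : TensorProduct ℝ U V →ₗ[ℝ] W) (j : W →ₗ[ℝ] K)
    (hi : Injective i) (hj : Surjective j)
    (hij : LinearMap.range i = LinearMap.ker j) :
    (∀ ε : W →ₗ[ℝ] U, (∃ vs : V →ₗ[ℝ] ℝ, ε ∘ₗ i = contractR U V vs) →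
      (∀ σ : W, ε σ = 0) → ε = 0) ∧
    (∀ σ : W, (∀ ε : W →ₗ[ℝ] U,
      (∃ vs : V →ₗ[ℝ] ℝ, ε ∘ₗ i = contractR U V vs) → ε σ = 0) → σ = 0) := by
  constructor
  · intro ε _ h
    ext σ
    simp [h σ]
  · intro σ hσ
    obtain ⟨u, hu⟩ := exists_ne (0 : U)
    -- Step 1: j σ = 0
    have hjσ : j σ = 0 := by
      rw [← Module.forall_dual_apply_eq_zero_iff ℝ]
      intro φ
      have hε : ((φ.smulRight u) ∘ₗ j) ∘ₗ i = contractR U V 0 := by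
        ext x y
        have hx : i (x ⊗ₜ[ℝ] y) ∈ LinearMap.ker j := hij ▸ LinearMap.mem_range_self i _
        simp [contractR, LinearMap.mem_ker.mp hx]
      have := hσ ((φ.smulRight u) ∘ₗ j) ⟨0, hε⟩
      simp only [LinearMap.comp_apply, LinearMap.smulRight_apply] at this
      rcases smul_eq_zero.mp this with h | h
      · exact h
      · exact absurd h hu
    obtain ⟨θ, hθ⟩ : σ ∈ LinearMap.range i := by
      rw [hij]; exact hjσ
    obtain ⟨g, hg⟩ := i.exists_leftInverse_of_injective (LinearMap.ker_eq_bot.mpr hi)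
    have key : ∀ vs : V →ₗ[ℝ] ℝ, contractR U V vs θ = 0 := by
      intro vs
      have hcomp : (contractR U V vs ∘ₗ g) ∘ₗ i = contractR U V vs := by
        rw [LinearMap.comp_assoc, hg, LinearMap.comp_id]
      have := hσ (contractR U V vs ∘ₗ g) ⟨vs, hcomp⟩
      have hgθ : g (i θ) = θ := LinearMap.congr_fun hg θ
      rw [← hθ] at this
      simpa [hgθ] using this
    have : θ = 0 := contractR_eq_zero U V θ key
    rw [← hθ, this, map_zero]
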